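/- arXiv:1512.09308 — 4 statements merged into one kernel-verified Lean document; each statement's English description precedes it below -/
import Mathlib

section
/- Let v, v_*, w ∈ ℝ³ with w = v + v_*, and let i be a positive integer. Let i⃗, j⃗ ∈ ℝ³ be such that ((v−v_*)/|v−v_*|, i⃗/|v−v_*|, j⃗/|v−v_*|) is an orthonormal basis (v ≠ v_*), and set Γ(φ) = (cos φ) i⃗ + (sin φ) j⃗. Then (1/(2π)) ∫₀^{2π} (w·Γ(φ))^{2i} dφ = C(2i, i) [|v|²|v_*|² − (v·v_*)²]^i ≤ 2^i C(2i, i) |v|^{2i} |v_*|^{2i}. -/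
/-!
With `a = w·i⃗` and `c = w·j⃗` the integrand is `(a cos φ + c sin φ)^(2i)`. Writing `(a, c)` in
polar form turns it into `r^(2i) cos^(2i) (φ - θ)`, whose mean over a period is `C(2i,i) / 4^i` by
Wallis' reduction formula, so the mean value is `C(2i,i) ((a² + c²) / 4)^i`. Parseval's identity in
the basis `(v - v_*, i⃗, j⃗) / |v - v_*|` gives `a² + c² = |v - v_*|² |w|² - (w·(v - v_*))²`, and a
Lagrange-type identity rewrites this as `4 (|v|² |v_*|² - (v·v_*)²)`. The inequality is
Cauchy–Schwarz.
-/

open Real intervalIntegral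
open scoped RealInnerProductSpace

theorem integral_cos_pow_two_mul_add_two_pi (a : ℝ) (n : ℕ) :
    ∫ x in a..a + 2 * π, cos x ^ (2 * n) = 2 * π * n.centralBinom / 4 ^ n := by
  induction n with
  | zero => simp [Nat.centralBinom]
  | succ n ih =>
    have hrec : ((n : ℝ) + 1) * (n + 1).centralBinom = 2 * (2 * n + 1) * n.centralBinom := by
      exact_mod_cast Nat.succ_mul_centralBinom_succ n
    -- the boundary terms of the reduction formula cancel by `2π`-periodicity
    rw [mul_add_one, integral_cos_pow, ih, cos_add_two_pi, sin_add_two_pi, sub_self, zero_div,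
      zero_add]
    field_simp
    push_cast
    linear_combination (-2 * 4 ^ n : ℝ) * hrec

theorem integral_mul_cos_add_mul_sin_pow_two_mul (a c : ℝ) (n : ℕ) :
    ∫ φ in (0)..2 * π, (a * cos φ + c * sin φ) ^ (2 * n)
      = 2 * π * n.centralBinom * ((a ^ 2 + c ^ 2) / 4) ^ n := by
  set z : ℂ := ⟨a, c⟩
  -- `Complex.norm_mul_cos_arg` also covers `z = 0`, so no case split is needed
  have hpolar (φ : ℝ) : a * cos φ + c * sin φ = ‖z‖ * cos (φ - z.arg) := by
    have hre : ‖z‖ * cos z.arg = a := Complex.norm_mul_cos_arg z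
    have him : ‖z‖ * sin z.arg = c := Complex.norm_mul_sin_arg z
    rw [cos_sub]
    linear_combination (-cos φ) * hre - sin φ * him
  have hnorm : ‖z‖ ^ 2 = a ^ 2 + c ^ 2 := by
    rw [Complex.sq_norm, Complex.normSq_mk]; ring
  simp_rw [hpolar, mul_pow, integral_const_mul]
  rw [integral_comp_sub_right (fun x => cos x ^ (2 * n)), zero_sub, sub_eq_neg_add,
    integral_cos_pow_two_mul_add_two_pi, pow_mul, hnorm, div_pow]
  ring

section InnerProductSpace

variable {E : Type*} [NormedAddCommGroup E] [InnerProductSpace ℝ E]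

theorem inner_sq_add_inner_sq_eq_of_orthonormalBasis (b : OrthonormalBasis (Fin 3) ℝ E)
    {d x y : E} (hd : d ≠ 0)
    (h0 : b 0 = ‖d‖⁻¹ • d) (h1 : b 1 = ‖d‖⁻¹ • x) (h2 : b 2 = ‖d‖⁻¹ • y) (w : E) :
    ⟪w, x⟫ ^ 2 + ⟪w, y⟫ ^ 2 = ‖d‖ ^ 2 * ‖w‖ ^ 2 - ⟪w, d⟫ ^ 2 := by
  have hparseval := b.sum_sq_inner_left w
  rw [Fin.sum_univ_three, h0, h1, h2] at hparseval
  simp only [real_inner_smul_right, mul_pow] at hparseval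
  have hd' : ‖d‖ ≠ 0 := norm_ne_zero_iff.mpr hd
  rw [← hparseval]
  field_simp
  ring

theorem norm_sub_sq_mul_norm_add_sq_sub_inner_sq (v u : E) :
    ‖v - u‖ ^ 2 * ‖v + u‖ ^ 2 - ⟪v + u, v - u⟫ ^ 2 = 4 * (‖v‖ ^ 2 * ‖u‖ ^ 2 - ⟪v, u⟫ ^ 2) := by
  rw [norm_sub_sq_real, norm_add_sq_real, inner_add_left, inner_sub_right, inner_sub_right,
    real_inner_self_eq_norm_sq, real_inner_self_eq_norm_sq, real_inner_comm u v]
  ring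

theorem pow_norm_sq_mul_norm_sq_sub_inner_sq_le (v u : E) (n : ℕ) :
    (‖v‖ ^ 2 * ‖u‖ ^ 2 - ⟪v, u⟫ ^ 2) ^ n ≤ ‖v‖ ^ (2 * n) * ‖u‖ ^ (2 * n) := by
  have hcs : ⟪v, u⟫ ^ 2 ≤ ‖v‖ ^ 2 * ‖u‖ ^ 2 := by
    rw [← mul_pow]
    exact sq_le_sq' (neg_le_of_abs_le (abs_real_inner_le_norm v u)) (real_inner_le_norm v u)
  rw [pow_mul, pow_mul, ← mul_pow (‖v‖ ^ 2)]
  exact pow_le_pow_left₀ (sub_nonneg.mpr hcs) (sub_le_self _ (sq_nonneg _)) n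

end InnerProductSpace

theorem integral_w_dot_Gamma_pow_general
    (v vs ivec jvec : EuclideanSpace ℝ (Fin 3)) (hne : v ≠ vs)
    (b : OrthonormalBasis (Fin 3) ℝ (EuclideanSpace ℝ (Fin 3)))
    (hb0 : b 0 = ‖v - vs‖⁻¹ • (v - vs))
    (hb1 : b 1 = ‖v - vs‖⁻¹ • ivec) (hb2 : b 2 = ‖v - vs‖⁻¹ • jvec)
    (i : ℕ) :
    (1/(2*π)) * (∫ φ in (0:ℝ)..(2*π),
        (inner ℝ (v + vs) (Real.cos φ • ivec + Real.sin φ • jvec) : ℝ) ^ (2*i))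
      = (Nat.choose (2*i) i : ℝ) * (‖v‖ ^ 2 * ‖vs‖ ^ 2 - (inner ℝ v vs : ℝ) ^ 2) ^ i ∧
    (Nat.choose (2*i) i : ℝ) * (‖v‖ ^ 2 * ‖vs‖ ^ 2 - (inner ℝ v vs : ℝ) ^ 2) ^ i
      ≤ 2 ^ i * (Nat.choose (2*i) i : ℝ) * ‖v‖ ^ (2*i) * ‖vs‖ ^ (2*i) := by
  have hperp := inner_sq_add_inner_sq_eq_of_orthonormalBasis b (sub_ne_zero.mpr hne) hb0 hb1 hb2
    (v + vs)
  rw [norm_sub_sq_mul_norm_add_sq_sub_inner_sq] at hperp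
  have hint : ∫ φ in (0)..2 * π, ⟪v + vs, cos φ • ivec + sin φ • jvec⟫ ^ (2 * i)
      = 2 * π * i.centralBinom * (‖v‖ ^ 2 * ‖vs‖ ^ 2 - ⟪v, vs⟫ ^ 2) ^ i := by
    simp_rw [inner_add_right, real_inner_smul_right, mul_comm (cos _), mul_comm (sin _)]
    rw [integral_mul_cos_add_mul_sin_pow_two_mul, hperp, mul_div_cancel_left₀ _ four_ne_zero]
  refine ⟨?_, ?_⟩
  · rw [hint, Nat.centralBinom_eq_two_mul_choose]
    field_simp
  · calc _ ≤ ((2 * i).choose i : ℝ) * (‖v‖ ^ (2 * i) * ‖vs‖ ^ (2 * i)) := by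
          gcongr; exact pow_norm_sq_mul_norm_sq_sub_inner_sq_le v vs i
      _ ≤ 2 ^ i * (((2 * i).choose i : ℝ) * (‖v‖ ^ (2 * i) * ‖vs‖ ^ (2 * i))) :=
          le_mul_of_one_le_left (by positivity) (one_le_pow₀ one_le_two)
      _ = _ := by ring

/-- For `w = v + v_*` and `Γ(φ) = cos φ • i + sin φ • j` with
`((v-v_*)/‖v-v_*‖, i/‖v-v_*‖, j/‖v-v_*‖)` orthonormal, one has
`(1/(2π)) ∫₀^{2π} (w·Γ(φ))^{2i} dφ = C(2i,i) [‖v‖²‖v_*‖² - (v·v_*)²]^i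
  ≤ 2^i C(2i,i) ‖v‖^{2i} ‖v_*‖^{2i}`. -/
theorem integral_w_dot_Gamma_pow
    (v vs ivec jvec : EuclideanSpace ℝ (Fin 3)) (hne : v ≠ vs)
    (b : OrthonormalBasis (Fin 3) ℝ (EuclideanSpace ℝ (Fin 3)))
    (hb0 : b 0 = ‖v - vs‖⁻¹ • (v - vs))
    (hb1 : b 1 = ‖v - vs‖⁻¹ • ivec) (hb2 : b 2 = ‖v - vs‖⁻¹ • jvec)
    (hi : ‖ivec‖ = ‖v - vs‖) (hj : ‖jvec‖ = ‖v - vs‖)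
    (i : ℕ) (hipos : 1 ≤ i) :
    (1/(2*π)) * (∫ φ in (0:ℝ)..(2*π),
        (inner ℝ (v + vs) (Real.cos φ • ivec + Real.sin φ • jvec) : ℝ) ^ (2*i))
      = (Nat.choose (2*i) i : ℝ) * (‖v‖ ^ 2 * ‖vs‖ ^ 2 - (inner ℝ v vs : ℝ) ^ 2) ^ i ∧
    (Nat.choose (2*i) i : ℝ) * (‖v‖ ^ 2 * ‖vs‖ ^ 2 - (inner ℝ v vs : ℝ) ^ 2) ^ i
      ≤ 2 ^ i * (Nat.choose (2*i) i : ℝ) * ‖v‖ ^ (2*i) * ‖vs‖ ^ (2*i) :=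
  integral_w_dot_Gamma_pow_general v vs ivec jvec hne b hb0 hb1 hb2 i
end

section
/- (Povzner-type estimate for even moments.) Assume I := ∫₀^{π/2} θ² β(θ) dθ < ∞ for a nonnegative measurable β on (0, π/2]. Let p = 2k with k ≥ 2 an integer. Then there is a constant Ã_p > 0 depending only on p such that for all v, v_* ∈ ℝ³, ∫₀^{π/2} ∫₀^{2π} (|v'(θ,φ)|^p + |v_*'(θ,φ)|^p − |v|^p − |v_*|^p) (dφ/2π) β(θ) dθ ≤ − A_p (|v|^p + |v_*|^p) + I Ã_p (|v|^{p−2}|v_*|² + |v_*|^{p−2}|v|²), where A_p = ∫₀^{π/2} [1 − sin(θ/2)^p − cos(θ/2)^p] β(θ) dθ > 0, and v'(θ,φ) = v + a(v,v_*,θ,φ), v_*'(θ,φ) = v_* − a(v,v_*,θ,φ) with a(v,v_*,θ,φ) = −((1−cos θ)/2)(v−v_*) + ((sin θ)/2)Γ(v−v_*, φ), Γ(x,φ) = (cos φ) i(x) + (sin φ) j(x) for measurable homogeneous i, j : ℝ³ → ℝ³ making (x/|x|, i(x)/|x|, j(x)/|x|) an orthonormal basis for x ≠ 0. -/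
/-!
Write `a = ‖v‖²`, `b = ‖v_*‖²` and `c = sin²(θ/2)`. Because `i(x), j(x)` complete `x` to an
orthogonal frame, the post-collisional energies are `‖v'‖² = A₁ + W` and `‖v_*'‖² = A₂ - W` with
`A₁ = (1-c)a + cb`, `A₂ = ca + (1-c)b` and `W = sin θ ⟪v, Γ(v - v_*, φ)⟫`, a trigonometric
polynomial of degree one in `φ`, hence of mean zero, with `W² ≤ 2θ²(a+b) min(a,b)`.
Expanding `(A₁ + W)^k + (A₂ - W)^k` to first order in `W`, the linear term averages out over `φ`,
and by convexity of `t ↦ tᵏ` on `[0, a+b]` the remainder lies between `0` and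
`2k²(a+b)^{k-2} W²`, which is `O(θ²(a^{k-1}b + b^{k-1}a))`. By the binomial theorem the
`φ`-independent part `A₁ᵏ + A₂ᵏ - aᵏ - bᵏ` is at most `-(1 - cᵏ - (1-c)ᵏ)(aᵏ + bᵏ)` plus cross
terms of size `O(c(a^{k-1}b + b^{k-1}a))`, and `c ≤ θ²`. Convexity also bounds it below by
`-kc(aᵏ + bᵏ)`, so every `θ`-integrand is `O(θ²)`, hence integrable against `β`.
-/

open Real MeasureTheory

/-- The deflection vector `a(v, v_*, θ, φ)` built from measurable homogeneous
completions `i, j` of `x/‖x‖` to an orthonormal basis. -/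
noncomputable def collKick (ivec jvec : EuclideanSpace ℝ (Fin 3) → EuclideanSpace ℝ (Fin 3))
    (v vs : EuclideanSpace ℝ (Fin 3)) (θ φ : ℝ) : EuclideanSpace ℝ (Fin 3) :=
  -(((1 - Real.cos θ)/2) • (v - vs))
    + ((Real.sin θ)/2) • (Real.cos φ • ivec (v - vs) + Real.sin φ • jvec (v - vs))

open Finset
open scoped RealInnerProductSpace

section Powers

variable {x y z M : ℝ}

theorem pow_sub_pow_sub_mul_nonneg (hx : 0 ≤ x) (hz : 0 ≤ z) (k : ℕ) :
    0 ≤ z ^ k - x ^ k - k * x ^ (k - 1) * (z - x) := by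
  induction k with
  | zero => simp
  | succ n ih =>
    rcases n with _ | n
    · simp
    · have step : z ^ (n + 2) - x ^ (n + 2) - ((n + 2 : ℕ) : ℝ) * x ^ (n + 1) * (z - x)
          = z * (z ^ (n + 1) - x ^ (n + 1) - ((n + 1 : ℕ) : ℝ) * x ^ n * (z - x))
            + (n + 1) * x ^ n * (z - x) ^ 2 := by push_cast; ring
      simp only [Nat.add_sub_cancel] at ih ⊢
      rw [step]
      exact add_nonneg (mul_nonneg hz ih) (by positivity)

theorem pow_sub_pow_sub_mul_le (hx : 0 ≤ x) (hz : 0 ≤ z) (hxM : x ≤ M) (hzM : z ≤ M) (k : ℕ) :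
    z ^ k - x ^ k - k * x ^ (k - 1) * (z - x) ≤ k ^ 2 * M ^ (k - 2) * (z - x) ^ 2 := by
  have hM : 0 ≤ M := hx.trans hxM
  have key (n : ℕ) : z ^ (n + 2) - x ^ (n + 2) - ((n : ℝ) + 2) * x ^ (n + 1) * (z - x)
      ≤ ((n : ℝ) + 2) ^ 2 * M ^ n * (z - x) ^ 2 := by
    induction n with
    | zero => norm_num; nlinarith [sq_nonneg (z - x)]
    | succ n ih =>
      have hR := pow_sub_pow_sub_mul_nonneg hx hz (n + 2)
      rw [show n + 2 - 1 = n + 1 by omega] at hR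
      push_cast at hR ⊢
      have h1 := mul_le_mul hzM ih hR hM
      have h2 : (n + 2) * x ^ (n + 1) * (z - x) ^ 2 ≤ (n + 2) * M ^ (n + 1) * (z - x) ^ 2 := by
        gcongr
      have h3 : 0 ≤ (n + 3) * M ^ (n + 1) * (z - x) ^ 2 := by positivity
      linear_combination h1 + h2 + h3
  rcases k with _ | _ | n
  · simp
  · norm_num; positivity
  · rw [show n + 1 + 1 - 1 = n + 1 by omega, show n + 1 + 1 - 2 = n by omega]
    push_cast
    linear_combination key n

theorem pow_add_add_pow_sub_mem_Icc {A₁ A₂ w : ℝ} (h₁ : 0 ≤ A₁) (h₂ : 0 ≤ A₂)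
    (h₁w : 0 ≤ A₁ + w) (h₂w : 0 ≤ A₂ - w) (k : ℕ) :
    (A₁ + w) ^ k + (A₂ - w) ^ k ∈ Set.Icc
      (A₁ ^ k + A₂ ^ k + k * (A₁ ^ (k - 1) - A₂ ^ (k - 1)) * w)
      (A₁ ^ k + A₂ ^ k + k * (A₁ ^ (k - 1) - A₂ ^ (k - 1)) * w
        + 2 * k ^ 2 * (A₁ + A₂) ^ (k - 2) * w ^ 2) := by
  have t₁ := pow_sub_pow_sub_mul_nonneg h₁ h₁w k
  have t₂ := pow_sub_pow_sub_mul_nonneg h₂ h₂w k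
  have u₁ := pow_sub_pow_sub_mul_le h₁ h₁w (M := A₁ + A₂) (by linarith) (by linarith) k
  have u₂ := pow_sub_pow_sub_mul_le h₂ h₂w (M := A₁ + A₂) (by linarith) (by linarith) k
  constructor
  · linear_combination t₁ + t₂
  · linear_combination u₁ + u₂

theorem pow_mul_pow_le_pow_add_pow (hx : 0 ≤ x) (hy : 0 ≤ y) (p q : ℕ) :
    x ^ p * y ^ q ≤ x ^ (p + q) + y ^ (p + q) := by
  rcases le_total x y with h | h
  · calc x ^ p * y ^ q ≤ y ^ p * y ^ q := by gcongr
      _ ≤ x ^ (p + q) + y ^ (p + q) := by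
          rw [← pow_add]; exact le_add_of_nonneg_left (by positivity)
  · calc x ^ p * y ^ q ≤ x ^ p * x ^ q := by gcongr
      _ ≤ x ^ (p + q) + y ^ (p + q) := by
          rw [← pow_add]; exact le_add_of_nonneg_right (by positivity)

theorem add_pow_le_pow_add_pow_add_mul (hx : 0 ≤ x) (hy : 0 ≤ y) (n : ℕ) :
    (x + y) ^ (n + 2) ≤ x ^ (n + 2) + y ^ (n + 2) + 2 ^ (n + 2) * (x * y) * (x ^ n + y ^ n) := by
  have hchoose : ∑ i ∈ range (n + 1), ((n + 2).choose (i + 1) : ℝ) ≤ 2 ^ (n + 2) := by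
    have h := Nat.sum_range_choose (n + 2)
    rw [sum_range_succ, sum_range_succ'] at h
    exact_mod_cast (by omega : ∑ i ∈ range (n + 1), (n + 2).choose (i + 1) ≤ 2 ^ (n + 2))
  have hterm (i : ℕ) (hi : i ∈ range (n + 1)) :
      x ^ (i + 1) * y ^ (n + 2 - (i + 1)) ≤ x * y * (x ^ n + y ^ n) := by
    obtain ⟨j, rfl⟩ := Nat.exists_eq_add_of_le (Nat.lt_succ_iff.mp (mem_range.mp hi))
    rw [show i + j + 2 - (i + 1) = j + 1 by omega]
    calc x ^ (i + 1) * y ^ (j + 1) = x * y * (x ^ i * y ^ j) := by ring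
      _ ≤ x * y * (x ^ (i + j) + y ^ (i + j)) := by
          gcongr; exact pow_mul_pow_le_pow_add_pow hx hy i j
  have hmid : ∑ i ∈ range (n + 1), x ^ (i + 1) * y ^ (n + 2 - (i + 1)) * ((n + 2).choose (i + 1) : ℝ)
      ≤ 2 ^ (n + 2) * (x * y) * (x ^ n + y ^ n) :=
    calc _ ≤ ∑ i ∈ range (n + 1), ((n + 2).choose (i + 1) : ℝ) * (x * y * (x ^ n + y ^ n)) :=
          sum_le_sum fun i hi => by
            rw [mul_comm]; exact mul_le_mul_of_nonneg_left (hterm i hi) (by positivity)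
      _ ≤ 2 ^ (n + 2) * (x * y) * (x ^ n + y ^ n) := by
          rw [← sum_mul, mul_assoc (2 ^ (n + 2) : ℝ)]
          exact mul_le_mul_of_nonneg_right hchoose (by positivity)
  rw [add_pow, sum_range_succ, sum_range_succ']
  simp only [Nat.choose_self, Nat.choose_zero_right, Nat.sub_self, Nat.sub_zero, Nat.cast_one,
    pow_zero, mul_one, one_mul]
  linarith

end Powers

def povznerDefect (k : ℕ) (c a b : ℝ) : ℝ :=
  ((1 - c) * a + c * b) ^ k + (c * a + (1 - c) * b) ^ k - a ^ k - b ^ k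

section Defect

variable {a b c : ℝ}

theorem povznerDefect_le (ha : 0 ≤ a) (hb : 0 ≤ b) (hc0 : 0 ≤ c) (hc1 : c ≤ 1) {k : ℕ}
    (hk : 2 ≤ k) :
    povznerDefect k c a b
      ≤ -(1 - c ^ k - (1 - c) ^ k) * (a ^ k + b ^ k)
        + 2 ^ (k + 1) * c * (a ^ (k - 1) * b + b ^ (k - 1) * a) := by
  obtain ⟨n, rfl⟩ := Nat.exists_eq_add_of_le' hk
  have hc' : 0 ≤ 1 - c := by linarith
  have hprod : (1 - c) * a * (c * b) ≤ c * (a * b) := by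
    have : 0 ≤ c ^ 2 * (a * b) := by positivity
    linear_combination this
  have hcross (x y : ℝ) (hx0 : 0 ≤ x) (hy0 : 0 ≤ y) (hxa : x ≤ a) (hyb : y ≤ b)
      (hxy : x * y ≤ c * (a * b)) :
      2 ^ (n + 2) * (x * y) * (x ^ n + y ^ n) ≤ 2 ^ (n + 2) * (c * (a * b)) * (a ^ n + b ^ n) := by
    gcongr
  have h₁ := add_pow_le_pow_add_pow_add_mul (mul_nonneg hc' ha) (mul_nonneg hc0 hb) n
  have h₂ := add_pow_le_pow_add_pow_add_mul (mul_nonneg hc0 ha) (mul_nonneg hc' hb) n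
  have h₃ := hcross _ _ (mul_nonneg hc' ha) (mul_nonneg hc0 hb)
    (mul_le_of_le_one_left ha (by linarith)) (mul_le_of_le_one_left hb hc1) hprod
  have h₄ := hcross _ _ (mul_nonneg hc0 ha) (mul_nonneg hc' hb)
    (mul_le_of_le_one_left ha hc1) (mul_le_of_le_one_left hb (by linarith)) (by linarith)
  rw [mul_pow, mul_pow] at h₁ h₂
  rw [povznerDefect, show n + 2 - 1 = n + 1 by omega]
  linear_combination h₁ + h₂ + h₃ + h₄

theorem neg_mul_le_povznerDefect (ha : 0 ≤ a) (hb : 0 ≤ b) (hc0 : 0 ≤ c) (hc1 : c ≤ 1) {k : ℕ}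
    (hk : 1 ≤ k) : -(k * c * (a ^ k + b ^ k)) ≤ povznerDefect k c a b := by
  have hc' : 0 ≤ 1 - c := by linarith
  have h₁ := pow_sub_pow_sub_mul_nonneg ha (by positivity : 0 ≤ (1 - c) * a + c * b) k
  have h₂ := pow_sub_pow_sub_mul_nonneg hb (by positivity : 0 ≤ c * a + (1 - c) * b) k
  obtain ⟨n, rfl⟩ := Nat.exists_eq_add_of_le' hk
  have h₃ : 0 ≤ ((n + 1 : ℕ) : ℝ) * c * (a ^ n * b + b ^ n * a) := by positivity
  simp only [Nat.add_sub_cancel] at h₁ h₂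
  rw [povznerDefect]
  linear_combination h₁ + h₂ + h₃

theorem one_sub_pow_sub_one_sub_pow_mem_Icc (hc0 : 0 ≤ c) (hc1 : c ≤ 1) {k : ℕ} (hk : 1 ≤ k) :
    1 - c ^ k - (1 - c) ^ k ∈ Set.Icc 0 (k * c) := by
  have hk0 : k ≠ 0 := by omega
  have h₁ : c ^ k ≤ c := pow_le_of_le_one hc0 hc1 hk0
  have h₂ : (1 - c) ^ k ≤ 1 - c := pow_le_of_le_one (by linarith) (by linarith) hk0
  have bernoulli : 1 + k * (-c) ≤ (1 + -c) ^ k := one_add_mul_le_pow (by linarith) k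
  rw [← sub_eq_add_neg] at bernoulli
  have : 0 ≤ c ^ k := by positivity
  constructor <;> linarith

theorem add_pow_mul_min_le (ha : 0 ≤ a) (hb : 0 ≤ b) (n : ℕ) :
    (a + b) ^ n * min a b ≤ 2 ^ n * (a ^ n * b + b ^ n * a) := by
  rcases le_total a b with h | h
  · rw [min_eq_left h]
    calc (a + b) ^ n * a ≤ (2 * b) ^ n * a := by gcongr; linarith
      _ ≤ 2 ^ n * (a ^ n * b + b ^ n * a) := by
          rw [mul_pow]; nlinarith [show 0 ≤ (2:ℝ) ^ n * (a ^ n * b) by positivity]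
  · rw [min_eq_right h]
    calc (a + b) ^ n * b ≤ (2 * a) ^ n * b := by gcongr; linarith
      _ ≤ 2 ^ n * (a ^ n * b + b ^ n * a) := by
          rw [mul_pow]; nlinarith [show 0 ≤ (2:ℝ) ^ n * (b ^ n * a) by positivity]

end Defect

theorem sin_half_sq_le_sq (θ : ℝ) : sin (θ / 2) ^ 2 ≤ θ ^ 2 :=
  sin_sq_le_sq.trans (by nlinarith [sq_nonneg θ])

theorem one_sub_cos_div_two (θ : ℝ) : (1 - cos θ) / 2 = sin (θ / 2) ^ 2 := by
  rw [sin_sq_eq_half_sub, show 2 * (θ / 2) = θ by ring]; ring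

theorem sq_sin_half_sq_add_sq_sin_div_two (θ : ℝ) :
    (sin (θ / 2) ^ 2) ^ 2 + (sin θ / 2) ^ 2 = sin (θ / 2) ^ 2 := by
  have h : sin θ = 2 * sin (θ / 2) * cos (θ / 2) := by rw [← sin_two_mul]; ring_nf
  rw [h]
  linear_combination sin (θ / 2) ^ 2 * sin_sq_add_cos_sq (θ / 2)

theorem abs_one_sub_sin_half_pow_sub_cos_half_pow_le {k : ℕ} (hk : 1 ≤ k) (θ : ℝ) :
    |1 - sin (θ / 2) ^ (2 * k) - cos (θ / 2) ^ (2 * k)| ≤ k * θ ^ 2 := by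
  rw [pow_mul, pow_mul, cos_sq']
  obtain ⟨h₀, h₁⟩ := one_sub_pow_sub_one_sub_pow_mem_Icc (sq_nonneg _) (sin_sq_le_one (θ / 2)) hk
  rw [abs_of_nonneg h₀]
  exact h₁.trans (mul_le_mul_of_nonneg_left (sin_half_sq_le_sq θ) k.cast_nonneg)

theorem integral_const_add_trig (C p q : ℝ) :
    ∫ φ in (0:ℝ)..2 * π, (C + (p * cos φ + q * sin φ)) = 2 * π * C := by
  rw [intervalIntegral.integral_add intervalIntegrable_const
      (Continuous.intervalIntegrable (by fun_prop) _ _),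
    intervalIntegral.integral_add (Continuous.intervalIntegrable (by fun_prop) _ _)
      (Continuous.intervalIntegrable (by fun_prop) _ _),
    intervalIntegral.integral_const_mul, intervalIntegral.integral_const_mul, integral_cos,
    integral_sin]
  simp

theorem integral_div_two_pi_mem_Icc {f : ℝ → ℝ} (hf : Continuous f) {D R p q : ℝ}
    (hlow : ∀ φ, D + (p * cos φ + q * sin φ) ≤ f φ)
    (hup : ∀ φ, f φ ≤ D + R + (p * cos φ + q * sin φ)) :
    ∫ φ in (0:ℝ)..2 * π, f φ / (2 * π) ∈ Set.Icc D (D + R) := by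
  have h2π : 0 < 2 * π := by positivity
  have hf' : IntervalIntegrable f volume 0 (2 * π) := hf.intervalIntegrable 0 (2 * π)
  have hlow' := intervalIntegral.integral_mono h2π.le
    (Continuous.intervalIntegrable (by fun_prop) _ _) hf' hlow
  have hup' := intervalIntegral.integral_mono h2π.le hf'
    (Continuous.intervalIntegrable (by fun_prop) _ _) hup
  rw [integral_const_add_trig] at hlow' hup'
  rw [intervalIntegral.integral_div, Set.mem_Icc, le_div_iff₀ h2π, div_le_iff₀ h2π]
  constructor <;> linarith

section Frame

variable {F : Type*} [NormedAddCommGroup F] [InnerProductSpace ℝ F]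

theorem norm_sq_postcollisional {v vs X : F} {c s : ℝ} (hcs : c ^ 2 + s ^ 2 = c)
    (hX : ⟪v - vs, X⟫ = 0) (hXn : ‖X‖ = ‖v - vs‖) :
    ‖v + (-(c • (v - vs)) + s • X)‖ ^ 2 = (1 - c) * ‖v‖ ^ 2 + c * ‖vs‖ ^ 2 + 2 * s * ⟪v, X⟫ ∧
    ‖vs - (-(c • (v - vs)) + s • X)‖ ^ 2 = c * ‖v‖ ^ 2 + (1 - c) * ‖vs‖ ^ 2 - 2 * s * ⟪v, X⟫ := by
  have hXX : ⟪X, X⟫ = ⟪v - vs, v - vs⟫ := by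
    rw [real_inner_self_eq_norm_sq, real_inner_self_eq_norm_sq, hXn]
  rw [inner_sub_left] at hX
  simp only [← real_inner_self_eq_norm_sq, inner_add_left, inner_add_right, inner_sub_left,
    inner_sub_right, inner_neg_left, inner_neg_right, real_inner_smul_left,
    real_inner_smul_right] at hXX ⊢
  simp only [real_inner_comm v vs, real_inner_comm v X, real_inner_comm vs X] at hXX ⊢
  constructor
  · linear_combination (⟪v, v⟫ - 2 * ⟪v, vs⟫ + ⟪vs, vs⟫) * hcs + s ^ 2 * hXX - 2 * c * s * hX
  · linear_combination
      (⟪v, v⟫ - 2 * ⟪v, vs⟫ + ⟪vs, vs⟫) * hcs + s ^ 2 * hXX + (2 * s - 2 * c * s) * hX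

theorem inner_frame_eq_zero_and_norm_frame {ivec jvec : F → F}
    (hi : ∀ (lam : ℝ) (x : F), ivec (lam • x) = lam • ivec x)
    (hj : ∀ (lam : ℝ) (x : F), jvec (lam • x) = lam • jvec x)
    (hortho : ∀ x : F, x ≠ 0 →
      ⟪x, ivec x⟫ = 0 ∧ ⟪x, jvec x⟫ = 0 ∧ ⟪ivec x, jvec x⟫ = 0 ∧ ‖ivec x‖ = ‖x‖ ∧ ‖jvec x‖ = ‖x‖)
    (x : F) (φ : ℝ) :
    ⟪x, cos φ • ivec x + sin φ • jvec x⟫ = 0 ∧ ‖cos φ • ivec x + sin φ • jvec x‖ = ‖x‖ := by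
  rcases eq_or_ne x 0 with rfl | hx
  · have hi0 : ivec 0 = 0 := by simpa using hi 0 0
    have hj0 : jvec 0 = 0 := by simpa using hj 0 0
    simp [hi0, hj0]
  obtain ⟨hxi, hxj, hij, hni, hnj⟩ := hortho x hx
  refine ⟨by simp [inner_add_right, real_inner_smul_right, hxi, hxj], ?_⟩
  rw [← sq_eq_sq₀ (norm_nonneg _) (norm_nonneg _), norm_add_sq_real, norm_smul, norm_smul,
    real_inner_smul_left, real_inner_smul_right, hij, hni, hnj]
  simp only [Real.norm_eq_abs, mul_pow, sq_abs]
  linear_combination ‖x‖ ^ 2 * cos_sq_add_sin_sq φ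

theorem sq_inner_le_of_inner_sub_eq_zero {v vs X : F} (hX : ⟪v - vs, X⟫ = 0)
    (hXn : ‖X‖ = ‖v - vs‖) :
    ⟪v, X⟫ ^ 2 ≤ 2 * (‖v‖ ^ 2 + ‖vs‖ ^ 2) * min (‖v‖ ^ 2) (‖vs‖ ^ 2) := by
  have hsame : ⟪vs, X⟫ = ⟪v, X⟫ := by rw [inner_sub_left] at hX; linarith
  have hu : ‖v - vs‖ ^ 2 ≤ 2 * (‖v‖ ^ 2 + ‖vs‖ ^ 2) := by
    nlinarith [norm_sub_le v vs, norm_nonneg (v - vs), sq_nonneg (‖v‖ - ‖vs‖)]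
  have hcs (w : F) (hw : ⟪w, X⟫ = ⟪v, X⟫) :
      ⟪v, X⟫ ^ 2 ≤ ‖w‖ ^ 2 * (2 * (‖v‖ ^ 2 + ‖vs‖ ^ 2)) :=
    calc ⟪v, X⟫ ^ 2 ≤ (‖w‖ * ‖X‖) ^ 2 := by
          rw [← hw, ← sq_abs]; gcongr; exact abs_real_inner_le_norm w X
      _ ≤ ‖w‖ ^ 2 * (2 * (‖v‖ ^ 2 + ‖vs‖ ^ 2)) := by rw [mul_pow, hXn]; gcongr
  rw [mul_comm, min_mul_of_nonneg _ _ (by positivity)]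
  exact le_min (hcs v rfl) (hcs vs hsame)

end Frame

local notation "ℝ³" => EuclideanSpace ℝ (Fin 3)

noncomputable def meanMomentChange (k : ℕ) (ivec jvec : ℝ³ → ℝ³) (v vs : ℝ³) (θ : ℝ) : ℝ :=
  ∫ φ in (0:ℝ)..(2*π),
    (‖v + collKick ivec jvec v vs θ φ‖ ^ (2*k) + ‖vs - collKick ivec jvec v vs θ φ‖ ^ (2*k)
      - ‖v‖ ^ (2*k) - ‖vs‖ ^ (2*k)) / (2*π)

theorem continuous_meanMomentChange (k : ℕ) (ivec jvec : ℝ³ → ℝ³) (v vs : ℝ³) :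
    Continuous (meanMomentChange k ivec jvec v vs) := by
  apply intervalIntegral.continuous_parametric_intervalIntegral_of_continuous'
  unfold collKick Function.uncurry
  fun_prop

section MomentChange

variable {ivec jvec : ℝ³ → ℝ³}
  (hi : ∀ (lam : ℝ) (x : ℝ³), ivec (lam • x) = lam • ivec x)
  (hj : ∀ (lam : ℝ) (x : ℝ³), jvec (lam • x) = lam • jvec x)
  (hortho : ∀ x : ℝ³, x ≠ 0 →
    ⟪x, ivec x⟫ = 0 ∧ ⟪x, jvec x⟫ = 0 ∧ ⟪ivec x, jvec x⟫ = 0 ∧ ‖ivec x‖ = ‖x‖ ∧ ‖jvec x‖ = ‖x‖)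
include hi hj hortho

theorem meanMomentChange_mem_Icc_povznerDefect (k : ℕ) (v vs : ℝ³) (θ : ℝ) :
    meanMomentChange k ivec jvec v vs θ ∈ Set.Icc
      (povznerDefect k (sin (θ / 2) ^ 2) (‖v‖ ^ 2) (‖vs‖ ^ 2))
      (povznerDefect k (sin (θ / 2) ^ 2) (‖v‖ ^ 2) (‖vs‖ ^ 2)
        + 2 * k ^ 2 * (‖v‖ ^ 2 + ‖vs‖ ^ 2) ^ (k - 2)
          * (θ ^ 2 * (2 * (‖v‖ ^ 2 + ‖vs‖ ^ 2) * min (‖v‖ ^ 2) (‖vs‖ ^ 2)))) := by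
  set c := sin (θ / 2) ^ 2
  set a := ‖v‖ ^ 2
  set b := ‖vs‖ ^ 2
  set A₁ := (1 - c) * a + c * b
  set A₂ := c * a + (1 - c) * b
  set W : ℝ → ℝ := fun φ => sin θ * ⟪v, cos φ • ivec (v - vs) + sin φ • jvec (v - vs)⟫
  have hc0 : 0 ≤ c := sq_nonneg _
  have hc1 : c ≤ 1 := sin_sq_le_one _
  have hframe (φ : ℝ) := inner_frame_eq_zero_and_norm_frame hi hj hortho (v - vs) φ
  have hnorm (φ : ℝ) : ‖v + collKick ivec jvec v vs θ φ‖ ^ 2 = A₁ + W φ ∧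
      ‖vs - collKick ivec jvec v vs θ φ‖ ^ 2 = A₂ - W φ := by
    have h := norm_sq_postcollisional (sq_sin_half_sq_add_sq_sin_div_two θ) (hframe φ).1
      (hframe φ).2
    rw [collKick, one_sub_cos_div_two, h.1, h.2]
    constructor <;> ring
  have hW (φ : ℝ) :
      W φ = sin θ * ⟪v, ivec (v - vs)⟫ * cos φ + sin θ * ⟪v, jvec (v - vs)⟫ * sin φ := by
    simp only [W, inner_add_right, real_inner_smul_right]; ring
  have hW2 (φ : ℝ) : W φ ^ 2 ≤ θ ^ 2 * (2 * (a + b) * min a b) := by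
    rw [mul_pow]
    exact mul_le_mul sin_sq_le_sq (sq_inner_le_of_inner_sub_eq_zero (hframe φ).1 (hframe φ).2)
      (sq_nonneg _) (sq_nonneg θ)
  have hpt (φ : ℝ) := pow_add_add_pow_sub_mem_Icc (A₁ := A₁) (A₂ := A₂) (w := W φ)
    (by positivity) (by positivity) (by rw [← (hnorm φ).1]; positivity)
    (by rw [← (hnorm φ).2]; positivity) k
  have hE : A₁ + A₂ = a + b := by ring
  have hR : 0 ≤ 2 * (k : ℝ) ^ 2 * (a + b) ^ (k - 2) := by positivity
  refine integral_div_two_pi_mem_Icc (by unfold collKick; fun_prop)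
    (p := k * (A₁ ^ (k - 1) - A₂ ^ (k - 1)) * (sin θ * ⟪v, ivec (v - vs)⟫))
    (q := k * (A₁ ^ (k - 1) - A₂ ^ (k - 1)) * (sin θ * ⟪v, jvec (v - vs)⟫)) (fun φ => ?_) fun φ => ?_
  all_goals
    rw [pow_mul, pow_mul, pow_mul, pow_mul, (hnorm φ).1, (hnorm φ).2, povznerDefect]
    have e : k * (A₁ ^ (k - 1) - A₂ ^ (k - 1)) * W φ
        = k * (A₁ ^ (k - 1) - A₂ ^ (k - 1)) * (sin θ * ⟪v, ivec (v - vs)⟫) * cos φ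
          + k * (A₁ ^ (k - 1) - A₂ ^ (k - 1)) * (sin θ * ⟪v, jvec (v - vs)⟫) * sin φ := by
      rw [hW]; ring
  · linarith [(hpt φ).1]
  · rw [hE] at hpt
    linarith [(hpt φ).2, mul_le_mul_of_nonneg_left (hW2 φ) hR]

theorem meanMomentChange_mem_Icc {k : ℕ} (hk : 2 ≤ k) (v vs : ℝ³) (θ : ℝ) :
    meanMomentChange k ivec jvec v vs θ ∈ Set.Icc
      (-(k * (‖v‖ ^ (2 * k) + ‖vs‖ ^ (2 * k)) * θ ^ 2))
      (-(1 - sin (θ / 2) ^ (2 * k) - cos (θ / 2) ^ (2 * k)) * (‖v‖ ^ (2 * k) + ‖vs‖ ^ (2 * k))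
        + 2 ^ (k + 1) * (k ^ 2 + 1)
          * (‖v‖ ^ (2 * k - 2) * ‖vs‖ ^ 2 + ‖vs‖ ^ (2 * k - 2) * ‖v‖ ^ 2) * θ ^ 2) := by
  obtain ⟨hlow, hup⟩ := meanMomentChange_mem_Icc_povznerDefect hi hj hortho k v vs θ
  set c := sin (θ / 2) ^ 2 with hc
  have hc0 : 0 ≤ c := sq_nonneg _
  have hc1 : c ≤ 1 := sin_sq_le_one _
  have hcθ : c ≤ θ ^ 2 := sin_half_sq_le_sq θ
  rw [Set.mem_Icc, pow_mul, pow_mul, pow_mul, pow_mul, cos_sq', ← hc,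
    show 2 * k - 2 = 2 * (k - 1) by omega, pow_mul, pow_mul]
  set a := ‖v‖ ^ 2
  set b := ‖vs‖ ^ 2
  have ha : 0 ≤ a := sq_nonneg _
  have hb : 0 ≤ b := sq_nonneg _
  constructor
  · have hD := neg_mul_le_povznerDefect ha hb hc0 hc1 (k := k) (by omega)
    have : k * c * (a ^ k + b ^ k) ≤ k * θ ^ 2 * (a ^ k + b ^ k) := by gcongr
    linarith
  · have hD := povznerDefect_le ha hb hc0 hc1 hk
    have hcX : 2 ^ (k + 1) * c * (a ^ (k - 1) * b + b ^ (k - 1) * a)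
        ≤ 2 ^ (k + 1) * θ ^ 2 * (a ^ (k - 1) * b + b ^ (k - 1) * a) := by gcongr
    obtain ⟨n, rfl⟩ := Nat.exists_eq_add_of_le' hk
    have hmin := add_pow_mul_min_le ha hb (n + 1)
    have hrem : 2 * ((n + 2 : ℕ) : ℝ) ^ 2 * (a + b) ^ n * (θ ^ 2 * (2 * (a + b) * min a b))
        ≤ 4 * ((n + 2 : ℕ) : ℝ) ^ 2 * θ ^ 2
          * (2 ^ (n + 1) * (a ^ (n + 1) * b + b ^ (n + 1) * a)) :=
      calc _ = 4 * ((n + 2 : ℕ) : ℝ) ^ 2 * θ ^ 2 * ((a + b) ^ (n + 1) * min a b) := by ring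
        _ ≤ _ := by gcongr
    simp only [show n + 2 - 2 = n by omega, show n + 2 - 1 = n + 1 by omega] at hup hD hcX ⊢
    linear_combination hup + hD + hcX + hrem

end MomentChange

theorem setIntegral_mul_le_of_bounds {s : Set ℝ} (hs : MeasurableSet s) {G h β : ℝ → ℝ}
    {S C K L : ℝ} (hG : Measurable G) (hh : Measurable h) (hβ : Measurable β)
    (hβ0 : ∀ θ ∈ s, 0 ≤ β θ) (hI : IntegrableOn (fun θ => θ ^ 2 * β θ) s)
    (hhL : ∀ θ ∈ s, |h θ| ≤ L * θ ^ 2) (hlow : ∀ θ ∈ s, -(K * θ ^ 2) ≤ G θ)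
    (hup : ∀ θ ∈ s, G θ ≤ -h θ * S + C * θ ^ 2) :
    ∫ θ in s, G θ * β θ ≤ -(∫ θ in s, h θ * β θ) * S + (∫ θ in s, θ ^ 2 * β θ) * C := by
  have hhβ : IntegrableOn (fun θ => h θ * β θ) s := by
    refine (hI.const_mul L).mono' (hh.mul hβ).aestronglyMeasurable ?_
    refine (ae_restrict_iff' hs).mpr (ae_of_all _ fun θ hθ => ?_)
    rw [norm_mul, Real.norm_eq_abs, Real.norm_eq_abs, abs_of_nonneg (hβ0 θ hθ), ← mul_assoc]
    exact mul_le_mul_of_nonneg_right (hhL θ hθ) (hβ0 θ hθ)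
  have hupper : IntegrableOn (fun θ => -S * (h θ * β θ) + C * (θ ^ 2 * β θ)) s :=
    (hhβ.const_mul _).add (hI.const_mul _)
  have hGβ : IntegrableOn (fun θ => G θ * β θ) s := by
    refine integrable_of_le_of_le (g₁ := fun θ => -K * (θ ^ 2 * β θ))
      (hG.mul hβ).aestronglyMeasurable ((ae_restrict_iff' hs).mpr (ae_of_all _ fun θ hθ => ?_))
      ((ae_restrict_iff' hs).mpr (ae_of_all _ fun θ hθ => ?_)) (hI.const_mul _) hupper
    · nlinarith [hlow θ hθ, hβ0 θ hθ]
    · nlinarith [hup θ hθ, hβ0 θ hθ]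
  calc ∫ θ in s, G θ * β θ ≤ ∫ θ in s, (-S * (h θ * β θ) + C * (θ ^ 2 * β θ)) :=
        setIntegral_mono_on hGβ hupper hs fun θ hθ => by nlinarith [hup θ hθ, hβ0 θ hθ]
    _ = -(∫ θ in s, h θ * β θ) * S + (∫ θ in s, θ ^ 2 * β θ) * C := by
        rw [integral_add (hhβ.const_mul _) (hI.const_mul _), integral_const_mul,
          integral_const_mul]
        ring

/-- Povzner-type estimate for even moments `p = 2k`, `k ≥ 2`: there is a constant
`Ã_p > 0` depending only on `p` such that, for every admissible angular kernel `β`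
with `I = ∫ θ² β(θ) dθ < ∞` and `A_p = ∫ (1 - sin(θ/2)^p - cos(θ/2)^p) β(θ) dθ > 0`,
and all `v, v_*`,
`∫∫ (|v'|^p + |v_*'|^p - |v|^p - |v_*|^p) (dφ/2π) β(θ)dθ
   ≤ -A_p (|v|^p + |v_*|^p) + I Ã_p (|v|^{p-2}|v_*|² + |v_*|^{p-2}|v|²)`. -/
theorem povzner_even_moments (k : ℕ) (hk : 2 ≤ k) :
    ∃ C > (0:ℝ),
      ∀ (β : ℝ → ℝ)
        (ivec jvec : EuclideanSpace ℝ (Fin 3) → EuclideanSpace ℝ (Fin 3)),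
        Measurable β → (∀ θ ∈ Set.Ioc (0:ℝ) (π/2), 0 ≤ β θ) →
        IntegrableOn (fun θ => θ ^ 2 * β θ) (Set.Ioc (0:ℝ) (π/2)) →
        Measurable ivec → Measurable jvec →
        (∀ (lam : ℝ) (x : EuclideanSpace ℝ (Fin 3)), ivec (lam • x) = lam • ivec x) →
        (∀ (lam : ℝ) (x : EuclideanSpace ℝ (Fin 3)), jvec (lam • x) = lam • jvec x) →
        (∀ x : EuclideanSpace ℝ (Fin 3), x ≠ 0 →
          (inner ℝ x (ivec x) : ℝ) = 0 ∧ (inner ℝ x (jvec x) : ℝ) = 0 ∧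
          (inner ℝ (ivec x) (jvec x) : ℝ) = 0 ∧ ‖ivec x‖ = ‖x‖ ∧ ‖jvec x‖ = ‖x‖) →
        0 < (∫ θ in Set.Ioc (0:ℝ) (π/2),
              (1 - Real.sin (θ/2) ^ (2*k) - Real.cos (θ/2) ^ (2*k)) * β θ) →
        ∀ v vs : EuclideanSpace ℝ (Fin 3),
          (∫ θ in Set.Ioc (0:ℝ) (π/2),
            (∫ φ in (0:ℝ)..(2*π),
              (‖v + collKick ivec jvec v vs θ φ‖ ^ (2*k)
                + ‖vs - collKick ivec jvec v vs θ φ‖ ^ (2*k)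
                - ‖v‖ ^ (2*k) - ‖vs‖ ^ (2*k)) / (2*π)) * β θ)
          ≤ - (∫ θ in Set.Ioc (0:ℝ) (π/2),
                (1 - Real.sin (θ/2) ^ (2*k) - Real.cos (θ/2) ^ (2*k)) * β θ)
              * (‖v‖ ^ (2*k) + ‖vs‖ ^ (2*k))
            + (∫ θ in Set.Ioc (0:ℝ) (π/2), θ ^ 2 * β θ) * C
              * (‖v‖ ^ (2*k - 2) * ‖vs‖ ^ 2 + ‖vs‖ ^ (2*k - 2) * ‖v‖ ^ 2) := by
  refine ⟨2 ^ (k + 1) * (k ^ 2 + 1), by positivity, ?_⟩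
  intro β ivec jvec hβ hβ0 hI _ _ hi hj hortho _ v vs
  refine (setIntegral_mul_le_of_bounds measurableSet_Ioc
    (continuous_meanMomentChange k ivec jvec v vs).measurable (by fun_prop) hβ hβ0 hI
    (fun θ _ => abs_one_sub_sin_half_pow_sub_cos_half_pow_le (by omega) θ)
    (fun θ _ => (meanMomentChange_mem_Icc hi hj hortho hk v vs θ).1)
    (fun θ _ => (meanMomentChange_mem_Icc hi hj hortho hk v vs θ).2)).trans_eq (by ring)
end

section
/- Let μ, ν ∈ P₂(ℝ³) be probability measures with finite second moment, and let M_μ = ∫ v dμ, S_μ² = ∫ |v − M_μ|² dμ (similarly for ν). Then (S_μ − S_ν)² + |M_μ − M_ν|² ≤ W₂²(μ, ν), where W₂ is the quadratic Wasserstein distance. -/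
/-!
Couple `μ` and `ν` by any `ρ` and read the two coordinates as random vectors `X ~ μ`,
`Y ~ ν` on `(ℝ³ × ℝ³, ρ)`. Splitting `X - Y` into its mean `M_μ - M_ν` and its centred part gives
`E‖X - Y‖² = E‖(X - M_μ) - (Y - M_ν)‖² + ‖M_μ - M_ν‖²`, and the reverse triangle inequality in
`L²(ρ)` bounds the first term below by `(S_μ - S_ν)²`. Taking the infimum over couplings ends the
proof.
-/

open Real MeasureTheory
open scoped RealInnerProductSpace

noncomputable def W2sq (μ ν : Measure (EuclideanSpace ℝ (Fin 3))) : ℝ :=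
  ⨅ πc : {πc : Measure (EuclideanSpace ℝ (Fin 3) × EuclideanSpace ℝ (Fin 3)) //
      πc.map Prod.fst = μ ∧ πc.map Prod.snd = ν},
    ∫ p, ‖p.1 - p.2‖ ^ 2 ∂(πc : Measure (EuclideanSpace ℝ (Fin 3) × EuclideanSpace ℝ (Fin 3)))

namespace MeasureTheory

variable {Ω : Type*} [MeasurableSpace Ω] {P : Measure Ω}

lemma MeasurePreserving.integral_comp_of_aestronglyMeasurable {Ω' F : Type*} [MeasurableSpace Ω']
    [NormedAddCommGroup F] [NormedSpace ℝ F] {φ : Ω → Ω'} {Q : Measure Ω'}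
    (hφ : MeasurePreserving φ P Q) {h : Ω' → F} (hh : AEStronglyMeasurable h Q) :
    ∫ ω, h (φ ω) ∂P = ∫ ω', h ω' ∂Q := by
  rw [← hφ.map_eq] at hh ⊢
  exact (integral_map hφ.aemeasurable hh).symm

section NormedGroup

variable {E : Type*} [NormedAddCommGroup E] {f g : Ω → E}

lemma lpNorm_two_eq_sqrt_integral_norm_sq (hf : AEStronglyMeasurable f P) :
    lpNorm f 2 P = √(∫ x, ‖f x‖ ^ 2 ∂P) := by
  rw [lpNorm_eq_integral_norm_rpow_toReal two_ne_zero ENNReal.ofNat_ne_top hf, Real.sqrt_eq_rpow]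
  norm_num

lemma sq_sqrt_integral_norm_sq_sub_le (hf : MemLp f 2 P) (hg : MemLp g 2 P) :
    (√(∫ x, ‖f x‖ ^ 2 ∂P) - √(∫ x, ‖g x‖ ^ 2 ∂P)) ^ 2 ≤ ∫ x, ‖f x - g x‖ ^ 2 ∂P := by
  have hrev : |lpNorm f 2 P - lpNorm g 2 P| ≤ lpNorm (f - g) 2 P := by
    rw [abs_sub_le_iff]
    constructor
    · linarith [lpNorm_le_lpNorm_add_lpNorm_sub' hg one_le_two (f := f)]
    · linarith [lpNorm_le_lpNorm_add_lpNorm_sub' hf one_le_two (f := g), lpNorm_sub_comm g f 2 P]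
  have hsq := pow_le_pow_left₀ (abs_nonneg _) hrev 2
  rwa [sq_abs, lpNorm_two_eq_sqrt_integral_norm_sq hf.1, lpNorm_two_eq_sqrt_integral_norm_sq hg.1,
    lpNorm_two_eq_sqrt_integral_norm_sq (hf.1.sub hg.1),
    Real.sq_sqrt (integral_nonneg fun x ↦ sq_nonneg _)] at hsq

end NormedGroup

section InnerProductSpace

variable {E : Type*} [NormedAddCommGroup E] [InnerProductSpace ℝ E] [CompleteSpace E]
  [IsProbabilityMeasure P]

lemma integral_norm_sq_eq_integral_norm_sub_integral_sq_add {f : Ω → E} (hf : MemLp f 2 P) :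
    ∫ x, ‖f x‖ ^ 2 ∂P = ∫ x, ‖f x - ∫ y, f y ∂P‖ ^ 2 ∂P + ‖∫ y, f y ∂P‖ ^ 2 := by
  set m := ∫ y, f y ∂P
  have hf1 : Integrable f P := hf.integrable one_le_two
  have hf2 : Integrable (fun x ↦ ‖f x‖ ^ 2) P := (memLp_two_iff_integrable_sq_norm hf.1).mp hf
  have hinner : Integrable (fun x ↦ 2 * ⟪m, f x⟫) P := (hf1.const_inner m).const_mul 2
  have hdiff : Integrable (fun x ↦ ‖f x‖ ^ 2 - 2 * ⟪m, f x⟫) P := hf2.sub hinner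
  calc ∫ x, ‖f x‖ ^ 2 ∂P = ∫ x, (‖f x‖ ^ 2 - 2 * ⟪m, f x⟫ + ‖m‖ ^ 2) ∂P + ‖m‖ ^ 2 := by
        rw [integral_add hdiff (integrable_const _), integral_sub hf2 hinner, integral_const_mul,
          integral_inner hf1, real_inner_self_eq_norm_sq, integral_const, probReal_univ, one_smul]
        ring
    _ = ∫ x, ‖f x - m‖ ^ 2 ∂P + ‖m‖ ^ 2 := by
        congr 2 with x
        rw [norm_sub_sq_real, real_inner_comm]

lemma sq_sqrt_sub_add_norm_integral_sub_sq_le {X Y : Ω → E} (hX : MemLp X 2 P) (hY : MemLp Y 2 P) :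
    (√(∫ ω, ‖X ω - ∫ a, X a ∂P‖ ^ 2 ∂P) - √(∫ ω, ‖Y ω - ∫ a, Y a ∂P‖ ^ 2 ∂P)) ^ 2
      + ‖(∫ a, X a ∂P) - ∫ a, Y a ∂P‖ ^ 2 ≤ ∫ ω, ‖X ω - Y ω‖ ^ 2 ∂P := by
  set mX := ∫ a, X a ∂P
  set mY := ∫ a, Y a ∂P
  have hmean : ∫ ω, (X ω - Y ω) ∂P = mX - mY :=
    integral_sub (hX.integrable one_le_two) (hY.integrable one_le_two)
  have hcenter (ω : Ω) : X ω - Y ω - (mX - mY) = (X ω - mX) - (Y ω - mY) := by abel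
  calc _ ≤ ∫ ω, ‖(X ω - mX) - (Y ω - mY)‖ ^ 2 ∂P + ‖mX - mY‖ ^ 2 := by
        gcongr
        exact sq_sqrt_integral_norm_sq_sub_le (hX.sub (memLp_const mX)) (hY.sub (memLp_const mY))
    _ = ∫ ω, ‖X ω - Y ω‖ ^ 2 ∂P := by
        rw [integral_norm_sq_eq_integral_norm_sub_integral_sq_add (f := fun ω ↦ X ω - Y ω)
          (hX.sub hY), hmean]
        simp_rw [hcenter]

end InnerProductSpace

end MeasureTheory

/-- Mean–standard deviation lower bound for the Wasserstein distance:
`(S_μ - S_ν)² + |M_μ - M_ν|² ≤ W₂²(μ, ν)`. -/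
theorem mean_var_le_W2sq (μ ν : Measure (EuclideanSpace ℝ (Fin 3)))
    [IsProbabilityMeasure μ] [IsProbabilityMeasure ν]
    (hμ2 : Integrable (fun v : EuclideanSpace ℝ (Fin 3) => ‖v‖ ^ 2) μ)
    (hν2 : Integrable (fun v : EuclideanSpace ℝ (Fin 3) => ‖v‖ ^ 2) ν) :
    (Real.sqrt (∫ v, ‖v - ∫ w, w ∂μ‖ ^ 2 ∂μ)
        - Real.sqrt (∫ v, ‖v - ∫ w, w ∂ν‖ ^ 2 ∂ν)) ^ 2
      + ‖(∫ w, w ∂μ) - ∫ w, w ∂ν‖ ^ 2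
      ≤ W2sq μ ν := by
  have : Nonempty {πc : Measure (EuclideanSpace ℝ (Fin 3) × EuclideanSpace ℝ (Fin 3)) //
      πc.map Prod.fst = μ ∧ πc.map Prod.snd = ν} := ⟨⟨μ.prod ν, by simp, by simp⟩⟩
  refine le_ciInf fun ⟨ρ, hρμ, hρν⟩ ↦ ?_
  have hfst : MeasurePreserving Prod.fst ρ μ := ⟨measurable_fst, hρμ⟩
  have hsnd : MeasurePreserving Prod.snd ρ ν := ⟨measurable_snd, hρν⟩
  have : IsProbabilityMeasure ρ := by
    rw [← Measure.isProbabilityMeasure_map_iff measurable_fst.aemeasurable, hρμ]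
    infer_instance
  have hX : MemLp Prod.fst 2 ρ :=
    ((memLp_two_iff_integrable_sq_norm aestronglyMeasurable_id).2 hμ2).comp_measurePreserving hfst
  have hY : MemLp Prod.snd 2 ρ :=
    ((memLp_two_iff_integrable_sq_norm aestronglyMeasurable_id).2 hν2).comp_measurePreserving hsnd
  have hμmean := hfst.integral_comp_of_aestronglyMeasurable (h := fun v ↦ v) aestronglyMeasurable_id
  have hνmean := hsnd.integral_comp_of_aestronglyMeasurable (h := fun v ↦ v) aestronglyMeasurable_id
  have hμvar := hfst.integral_comp_of_aestronglyMeasurable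
    (h := fun v ↦ ‖v - ∫ w, w ∂μ‖ ^ 2) (by fun_prop)
  have hνvar := hsnd.integral_comp_of_aestronglyMeasurable
    (h := fun v ↦ ‖v - ∫ w, w ∂ν‖ ^ 2) (by fun_prop)
  have key := sq_sqrt_sub_add_norm_integral_sub_sq_le hX hY
  rwa [hμmean, hνmean, hμvar, hνvar] at key
end

section
/- (Standardization bound.) Let x¹,…,x^N ∈ ℝ³ with empirical mean M = (1/N)∑_j x^j and variance S² = (1/N)∑_j |x^j − M|² > 0, and define y^i = (x^i − M)/S. Then (1/N)∑_i |x^i − y^i|² = (S−1)² + |M|². Consequently, for any μ ∈ P₂(ℝ³) with mean 0 and second moment 1, (1/N)∑_i |x^i − y^i|² ≤ W₂²(x̄, μ), where x̄ = (1/N)∑_i δ_{x^i} is the empirical measure. -/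
open Real MeasureTheory
open scoped ENNReal RealInnerProductSpace

section InnerProductSpace

variable {E : Type*} [NormedAddCommGroup E] [InnerProductSpace ℝ E]

/-- Expanding `‖u - v‖²`, this is `2⟪u, v⟫ ≤ t⁻¹‖u‖² + t‖v‖²`. -/
theorem one_sub_inv_mul_norm_sq_add_le_norm_sub_sq {t : ℝ} (ht : 0 < t) (u v : E) :
    (1 - t⁻¹) * ‖u‖ ^ 2 + (1 - t) * ‖v‖ ^ 2 ≤ ‖u - v‖ ^ 2 := by
  have hCS : ⟪u, v⟫ ≤ ‖u‖ * ‖v‖ := real_inner_le_norm u v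
  have hAMGM : 0 ≤ t⁻¹ * (‖u‖ - t * ‖v‖) ^ 2 := by positivity
  have hexpand : t⁻¹ * (‖u‖ - t * ‖v‖) ^ 2 = t⁻¹ * ‖u‖ ^ 2 - 2 * (‖u‖ * ‖v‖) + t * ‖v‖ ^ 2 := by
    field_simp; ring
  rw [norm_sub_sq_real]
  linarith

theorem sum_sub_mean_eq_zero {ι : Type*} [Fintype ι] [Nonempty ι] (x : ι → E) :
    ∑ i, (x i - (Fintype.card ι : ℝ)⁻¹ • ∑ j, x j) = 0 := by
  rw [Finset.sum_sub_distrib, Finset.sum_const, Finset.card_univ, ← Nat.cast_smul_eq_nsmul ℝ,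
    smul_inv_smul₀ (by positivity), sub_self]

theorem sum_norm_smul_sub_add_sq {ι : Type*} [Fintype ι] (x : ι → E) {M : E}
    (hM : ∑ i, (x i - M) = 0) (c : ℝ) :
    ∑ i, ‖c • (x i - M) + M‖ ^ 2 = c ^ 2 * ∑ i, ‖x i - M‖ ^ 2 + Fintype.card ι * ‖M‖ ^ 2 := by
  have hexpand : ∀ i, ‖c • (x i - M) + M‖ ^ 2
      = c ^ 2 * ‖x i - M‖ ^ 2 + 2 * c * ⟪x i - M, M⟫ + ‖M‖ ^ 2 := by
    intro i
    rw [norm_add_sq_real, norm_smul, real_inner_smul_left, mul_pow, Real.norm_eq_abs, sq_abs]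
    ring
  simp only [hexpand, Finset.sum_add_distrib, ← Finset.mul_sum, ← sum_inner, hM, inner_zero_left,
    mul_zero, add_zero, Finset.sum_const, Finset.card_univ, nsmul_eq_mul]

end InnerProductSpace

theorem integral_add_integral_le_integral_of_map_eq {X Y : Type*} [MeasurableSpace X]
    [MeasurableSpace Y] {μ : Measure X} {ν : Measure Y} {P : Measure (X × Y)}
    (hfst : P.map Prod.fst = μ) (hsnd : P.map Prod.snd = ν) {f : X → ℝ} {g : Y → ℝ}
    {c : X × Y → ℝ} (hf : Integrable f μ) (hg : Integrable g ν) (hc : Integrable c P)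
    (hfgc : ∀ x y, f x + g y ≤ c (x, y)) :
    ∫ x, f x ∂μ + ∫ y, g y ∂ν ≤ ∫ p, c p ∂P := by
  subst hfst hsnd
  have hf' := hf.comp_measurable measurable_fst
  have hg' := hg.comp_measurable measurable_snd
  rw [integral_map measurable_fst.aemeasurable hf.1, integral_map measurable_snd.aemeasurable hg.1]
  calc ∫ p, f p.1 ∂P + ∫ p, g p.2 ∂P = ∫ p, (f p.1 + g p.2) ∂P := (integral_add hf' hg').symm
    _ ≤ ∫ p, c p ∂P := integral_mono (hf'.add hg') hc fun p => hfgc p.1 p.2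

section Moments

variable {E : Type*} [NormedAddCommGroup E] [InnerProductSpace ℝ E] [MeasurableSpace E]
  {μ : Measure E}

theorem MeasureTheory.MemLp.integrable_mul_norm_sub_sq_add_inner [IsFiniteMeasure μ]
    (hμ : MemLp id 2 μ) (α β : ℝ) (m d : E) :
    Integrable (fun a => α * ‖a - m‖ ^ 2 + 2 * ⟪a - m, d⟫ + β) μ :=
  ((((hμ.sub (memLp_const m)).integrable_norm_pow two_ne_zero).const_mul α).add
    ((((hμ.integrable one_le_two).sub (integrable_const m)).inner_const d).const_mul 2)).add
    (integrable_const β)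

variable [CompleteSpace E]

theorem integral_mul_norm_sub_integral_sq_add_inner [IsProbabilityMeasure μ] (hμ : MemLp id 2 μ)
    (α β : ℝ) (d : E) :
    ∫ a, (α * ‖a - ∫ v, v ∂μ‖ ^ 2 + 2 * ⟪a - ∫ v, v ∂μ, d⟫ + β) ∂μ
      = α * ∫ a, ‖a - ∫ v, v ∂μ‖ ^ 2 ∂μ + β := by
  have hid : Integrable (fun a => a) μ := hμ.integrable one_le_two
  have hcentered : Integrable (fun a => a - ∫ v, v ∂μ) μ := hid.sub (integrable_const _)
  have hsq : Integrable (fun a => ‖a - ∫ v, v ∂μ‖ ^ 2) μ :=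
    (hμ.sub (memLp_const _)).integrable_norm_pow two_ne_zero
  have hinner : Integrable (fun a => 2 * ⟪a - ∫ v, v ∂μ, d⟫) μ :=
    (hcentered.inner_const d).const_mul 2
  have hlin : ∫ a, ⟪a - ∫ v, v ∂μ, d⟫ ∂μ = 0 := by
    simp_rw [real_inner_comm d]
    rw [integral_inner hcentered, integral_sub hid (integrable_const _)]
    simp
  have hquad : Integrable (fun a => α * ‖a - ∫ v, v ∂μ‖ ^ 2 + 2 * ⟪a - ∫ v, v ∂μ, d⟫) μ :=
    (hsq.const_mul α).add hinner
  rw [integral_add hquad (integrable_const β),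
    integral_add (hsq.const_mul α) hinner, integral_const_mul, integral_const_mul, hlin,
    integral_const]
  simp

theorem sq_sub_add_norm_sub_sq_le_integral_norm_sub_sq [IsProbabilityMeasure μ] {ν : Measure E}
    [IsProbabilityMeasure ν] (hμ : MemLp id 2 μ) (hν : MemLp id 2 ν) {σ τ : ℝ} (hσ : 0 < σ)
    (hτ : 0 < τ) (hμσ : ∫ a, ‖a - ∫ v, v ∂μ‖ ^ 2 ∂μ = σ ^ 2)
    (hντ : ∫ b, ‖b - ∫ v, v ∂ν‖ ^ 2 ∂ν = τ ^ 2) {P : Measure (E × E)}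
    (hfst : P.map Prod.fst = μ) (hsnd : P.map Prod.snd = ν) :
    (σ - τ) ^ 2 + ‖∫ v, v ∂μ - ∫ v, v ∂ν‖ ^ 2 ≤ ∫ p, ‖p.1 - p.2‖ ^ 2 ∂P := by
  set m₁ := ∫ v, v ∂μ
  set m₂ := ∫ v, v ∂ν
  set t := σ / τ
  have hcost : Integrable (fun p : E × E => ‖p.1 - p.2‖ ^ 2) P :=
    ((hμ.comp_measurePreserving ⟨measurable_fst, hfst⟩).sub
      (hν.comp_measurePreserving ⟨measurable_snd, hsnd⟩)).integrable_norm_pow two_ne_zero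
  have hpointwise : ∀ a b : E,
      ((1 - t⁻¹) * ‖a - m₁‖ ^ 2 + 2 * ⟪a - m₁, m₁ - m₂⟫ + ‖m₁ - m₂‖ ^ 2)
        + ((1 - t) * ‖b - m₂‖ ^ 2 + 2 * ⟪b - m₂, -(m₁ - m₂)⟫ + 0) ≤ ‖a - b‖ ^ 2 := by
    intro a b
    have hsplit : a - b = ((a - m₁) - (b - m₂)) + (m₁ - m₂) := by abel
    have := one_sub_inv_mul_norm_sq_add_le_norm_sub_sq (by positivity : 0 < t) (a - m₁) (b - m₂)
    rw [inner_neg_right, hsplit, norm_add_sq_real, inner_sub_left (a - m₁) (b - m₂)]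
    linarith
  have hdual := integral_add_integral_le_integral_of_map_eq hfst hsnd
    (hμ.integrable_mul_norm_sub_sq_add_inner _ _ _ _)
    (hν.integrable_mul_norm_sub_sq_add_inner _ _ _ _) hcost hpointwise
  rw [integral_mul_norm_sub_integral_sq_add_inner hμ,
    integral_mul_norm_sub_integral_sq_add_inner hν, hμσ, hντ] at hdual
  calc (σ - τ) ^ 2 + ‖m₁ - m₂‖ ^ 2
      = (1 - t⁻¹) * σ ^ 2 + ‖m₁ - m₂‖ ^ 2 + ((1 - t) * τ ^ 2 + 0) := by
        simp only [t]; field_simp; ring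
    _ ≤ _ := hdual

end Moments

theorem sq_sub_add_norm_sub_sq_le_W2sq {μ ν : Measure (EuclideanSpace ℝ (Fin 3))}
    [IsProbabilityMeasure μ] [IsProbabilityMeasure ν] (hμ : MemLp id 2 μ) (hν : MemLp id 2 ν)
    {σ τ : ℝ} (hσ : 0 < σ) (hτ : 0 < τ) (hμσ : ∫ a, ‖a - ∫ v, v ∂μ‖ ^ 2 ∂μ = σ ^ 2)
    (hντ : ∫ b, ‖b - ∫ v, v ∂ν‖ ^ 2 ∂ν = τ ^ 2) :
    (σ - τ) ^ 2 + ‖∫ v, v ∂μ - ∫ v, v ∂ν‖ ^ 2 ≤ W2sq μ ν := by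
  have : Nonempty {P : Measure (EuclideanSpace ℝ (Fin 3) × EuclideanSpace ℝ (Fin 3)) //
      P.map Prod.fst = μ ∧ P.map Prod.snd = ν} := ⟨⟨μ.prod ν, by simp, by simp⟩⟩
  exact le_ciInf fun P =>
    sq_sub_add_norm_sub_sq_le_integral_norm_sub_sq hμ hν hσ hτ hμσ hντ P.2.1 P.2.2

section EmpiricalMeasure

variable {X ι : Type*} [MeasurableSpace X] [Fintype ι]

noncomputable def empiricalMeasure (x : ι → X) : Measure X :=
  (Fintype.card ι : ℝ≥0∞)⁻¹ • ∑ i, Measure.dirac (x i)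

instance isProbabilityMeasure_empiricalMeasure [Nonempty ι] (x : ι → X) :
    IsProbabilityMeasure (empiricalMeasure x) := by
  constructor
  simp [empiricalMeasure, ENNReal.inv_mul_cancel]

variable [MeasurableSingletonClass X] {F : Type*} [NormedAddCommGroup F]

theorem integral_empiricalMeasure [NormedSpace ℝ F] [CompleteSpace F] (x : ι → X) (f : X → F) :
    ∫ v, f v ∂empiricalMeasure x = (Fintype.card ι : ℝ)⁻¹ • ∑ i, f (x i) := by
  rw [empiricalMeasure, integral_smul_measure,
    integral_finsetSum_measure fun i _ => integrable_dirac enorm_lt_top]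
  simp [integral_dirac]

theorem integrable_empiricalMeasure [Nonempty ι] (x : ι → X) (f : X → F) :
    Integrable f (empiricalMeasure x) :=
  (integrable_finsetSum_measure.2 fun i _ => integrable_dirac enorm_lt_top).smul_measure
    (by simp)

end EmpiricalMeasure

/-- Standardization bound: if `y^i = (x^i - M)/S` with `M, S` the empirical mean and
standard deviation (`S > 0`), then `(1/N)∑ |x^i - y^i|² = (S-1)² + |M|²`, which is
bounded by `W₂²(x̄, μ)` for any `μ` with mean `0` and second moment `1`. -/
theorem standardization_bound (N : ℕ) (hN : 1 ≤ N)
    (x y : Fin N → EuclideanSpace ℝ (Fin 3))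
    (M : EuclideanSpace ℝ (Fin 3)) (hM : M = (N:ℝ)⁻¹ • ∑ i, x i)
    (S : ℝ) (hS : S = Real.sqrt ((N:ℝ)⁻¹ * ∑ i, ‖x i - M‖ ^ 2)) (hSpos : 0 < S)
    (hy : ∀ i, y i = S⁻¹ • (x i - M))
    (μ : Measure (EuclideanSpace ℝ (Fin 3))) [IsProbabilityMeasure μ]
    (hμint : Integrable (fun v : EuclideanSpace ℝ (Fin 3) => ‖v‖ ^ 2) μ)
    (hμmean : (∫ v, v ∂μ) = 0) (hμ2 : (∫ v, ‖v‖ ^ 2 ∂μ) = 1) :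
    (N:ℝ)⁻¹ * ∑ i, ‖x i - y i‖ ^ 2 = (S - 1) ^ 2 + ‖M‖ ^ 2 ∧
    (N:ℝ)⁻¹ * ∑ i, ‖x i - y i‖ ^ 2
      ≤ W2sq ((N : ℝ≥0∞)⁻¹ • ∑ i, Measure.dirac (x i)) μ := by
  have : Nonempty (Fin N) := ⟨⟨0, hN⟩⟩
  have hS2 : (N:ℝ)⁻¹ * ∑ i, ‖x i - M‖ ^ 2 = S ^ 2 := by rw [hS, sq_sqrt (by positivity)]
  have hcentered : ∑ i, (x i - M) = 0 := by simpa [hM] using sum_sub_mean_eq_zero x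
  have hxy : ∀ i, x i - y i = (1 - S⁻¹) • (x i - M) + M := fun i => by rw [hy i]; module
  have hdist : (N:ℝ)⁻¹ * ∑ i, ‖x i - y i‖ ^ 2 = (S - 1) ^ 2 + ‖M‖ ^ 2 := by
    simp only [hxy, sum_norm_smul_sub_add_sq x hcentered, Fintype.card_fin]
    rw [mul_add, mul_left_comm, hS2]
    field_simp
  refine ⟨hdist, hdist ▸ ?_⟩
  have hempirical : (N : ℝ≥0∞)⁻¹ • ∑ i, Measure.dirac (x i) = empiricalMeasure x := by
    simp [empiricalMeasure]
  have hmean : ∫ v, v ∂empiricalMeasure x = M := by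
    simp [integral_empiricalMeasure, hM]
  have hvar : ∫ v, ‖v - ∫ w, w ∂empiricalMeasure x‖ ^ 2 ∂empiricalMeasure x = S ^ 2 := by
    simp [integral_empiricalMeasure, hmean, hS2]
  have hμ : MemLp id 2 μ := (memLp_two_iff_integrable_sq_norm aestronglyMeasurable_id).2 hμint
  have hx : MemLp id 2 (empiricalMeasure x) :=
    (memLp_two_iff_integrable_sq_norm aestronglyMeasurable_id).2 (integrable_empiricalMeasure x _)
  simpa [hempirical, hmean, hμmean] using
    sq_sub_add_norm_sub_sq_le_W2sq hx hμ hSpos one_pos hvar (by simpa [hμmean] using hμ2)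
end
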